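/- Let F be a graph with a cut-edge e such that G and H are the two components of F − e. If k is an integer with 2 ≤ k < min{δ(G), δ(H)}, then γ_{×k,t}(G_I) + γ_{×k,t}(H_I) − 2 ≤ γ_{×k,t}(F_I) ≤ γ_{×k,t}(G_I) + γ_{×k,t}(H_I). -/

import Mathlib

open SimpleGraph

/-- The inflated graph `G_I` of a graph `G`: its vertices are the darts (oriented edges) of
`G`; the darts with first coordinate `x` form the clique `X_x` (of size `deg x`), and each
edge `xy` of `G` gives the "blue" edge between the dart `(x,y)` and its reverse `(y,x)`;
these blue edges form a perfect matching.  Equivalently, `inflation G` is the line graph of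
the subdivision of `G`. -/
def inflation {V : Type*} (G : SimpleGraph V) : SimpleGraph G.Dart :=
  SimpleGraph.fromRel (fun d₁ d₂ => d₁.toProd.1 = d₂.toProd.1 ∨ d₁.toProd = d₂.toProd.swap)

/-- `S` is a `k`-tuple total dominating set of `H`: every vertex has at least `k`
neighbours in `S`. -/
def IsKTDS {W : Type*} (H : SimpleGraph W) (k : ℕ) (S : Set W) : Prop :=
  ∀ v : W, k ≤ (S ∩ H.neighborSet v).ncard

/-- The `k`-tuple total domination number of `H`: the minimum cardinality of a `k`-tuple
total dominating set. -/
noncomputable def ktdn {W : Type*} (H : SimpleGraph W) (k : ℕ) : ℕ :=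
  sInf {n | ∃ S : Set W, IsKTDS H k S ∧ S.ncard = n}

/-- `H` is a 2-factor of `G`: a spanning 2-regular subgraph of `G`, i.e. a vertex-disjoint
union of cycles covering all vertices. -/
def IsTwoFactor {V : Type*} (G H : SimpleGraph V) : Prop :=
  H ≤ G ∧ ∀ v : V, (H.neighborSet v).ncard = 2

/-- `G` is a `k`-Hamiltonian-like decomposable graph (kHLD-graph): `G` contains `k`
pairwise edge-disjoint 2-factors. -/
def IsKHLD {V : Type*} (G : SimpleGraph V) (k : ℕ) : Prop :=
  ∃ F : Fin k → SimpleGraph V, (∀ i, IsTwoFactor G (F i)) ∧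
    ∀ i j, i ≠ j → Disjoint (F i) (F j)

/-- `M` is a perfect matching of `G`, viewed as a 1-regular spanning subgraph. -/
def IsPerfectMatchingGraph {V : Type*} (G M : SimpleGraph V) : Prop :=
  M ≤ G ∧ ∀ v : V, (M.neighborSet v).ncard = 1

/-- `M` is a matching of `G`: a subgraph of maximum degree at most 1. -/
def IsMatchingGraph {V : Type*} (G M : SimpleGraph V) : Prop :=
  M ≤ G ∧ ∀ v : V, (M.neighborSet v).ncard ≤ 1

/-- `G` is a kHLPM-graph: `G` contains `k` pairwise edge-disjoint 2-factors together with
a perfect matching edge-disjoint from each of these 2-factors. -/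
def IsKHLPM {V : Type*} (G : SimpleGraph V) (k : ℕ) : Prop :=
  ∃ (F : Fin k → SimpleGraph V) (M : SimpleGraph V),
    (∀ i, IsTwoFactor G (F i)) ∧ (∀ i j, i ≠ j → Disjoint (F i) (F j)) ∧
    IsPerfectMatchingGraph G M ∧ ∀ i, Disjoint M (F i)

/-- `G` is a kHLMM-graph: `G` contains `k` pairwise edge-disjoint 2-factors together with
a matching of size `⌊n/2⌋` edge-disjoint from each of these 2-factors. -/
def IsKHLMM {V : Type*} [Fintype V] (G : SimpleGraph V) (k : ℕ) : Prop :=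
  ∃ (F : Fin k → SimpleGraph V) (M : SimpleGraph V),
    (∀ i, IsTwoFactor G (F i)) ∧ (∀ i j, i ≠ j → Disjoint (F i) (F j)) ∧
    IsMatchingGraph G M ∧ M.edgeSet.ncard = Fintype.card V / 2 ∧ ∀ i, Disjoint M (F i)

/-- The graph `F` on `V ⊕ W` obtained from the disjoint union of `G` (on `V`) and `H`
(on `W`) by adding the single edge between `x : V` and `y : W`.  When `G` and `H` are
connected, this added edge is a cut-edge of `F` whose removal leaves exactly the two
components `G` and `H`. -/
def joinByEdge {V W : Type*} (G : SimpleGraph V) (H : SimpleGraph W) (x : V) (y : W) :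
    SimpleGraph (V ⊕ W) :=
  SimpleGraph.fromRel (fun a b =>
    match a, b with
    | Sum.inl u, Sum.inl v => G.Adj u v
    | Sum.inr u, Sum.inr v => H.Adj u v
    | Sum.inl u, Sum.inr v => u = x ∧ v = y
    | Sum.inr _, Sum.inl _ => False)

/-- The generalized Petersen graph `P(n,m)`: vertices `a_i` (the left copies) and `b_i`
(the right copies) for `i ∈ ZMod n`, with edges `a_i a_{i+1}`, `a_i b_i`, `b_i b_{i+m}`. -/
def genPetersen (n m : ℕ) : SimpleGraph (ZMod n ⊕ ZMod n) :=
  SimpleGraph.fromRel (fun a b =>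
    match a, b with
    | Sum.inl i, Sum.inl j => j = i + 1
    | Sum.inl i, Sum.inr j => j = i
    | Sum.inr i, Sum.inr j => j = i + (m : ZMod n)
    | Sum.inr _, Sum.inl _ => False)

/-- Cyclic distance between `i` and `j` on the cycle `ZMod n`. -/
def cycDist (n : ℕ) (i j : ZMod n) : ℕ := min (i - j).val (j - i).val

/-- The Harary graph `H_{m,n}` on `ZMod n`: each vertex is adjacent to the nearest `m/2`
vertices in each direction around the circle; if `m` is odd and `n` is even, each vertex
is also adjacent to the diametrically opposite vertex; if `m` and `n` are both odd, the
edges `(i, i + (n-1)/2)` for `0 ≤ i ≤ (n-1)/2` are added instead. -/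
def harary (m n : ℕ) : SimpleGraph (ZMod n) :=
  SimpleGraph.fromRel (fun i j =>
    (1 ≤ cycDist n i j ∧ cycDist n i j ≤ m / 2) ∨
    (m % 2 = 1 ∧ n % 2 = 0 ∧ j = i + ((n / 2 : ℕ) : ZMod n)) ∨
    (m % 2 = 1 ∧ n % 2 = 1 ∧ (∃ t : ℕ, t ≤ (n - 1) / 2 ∧ i = (t : ZMod n)) ∧
      j = i + (((n - 1) / 2 : ℕ) : ZMod n)))

/-- The graph obtained by gluing the graphs `G i` (on vertex types `V i`) at the
distinguished vertices `x i`, which are all identified to the single vertex `none`.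
The `v`-components of the resulting graph at the cut-vertex `v = none` are exactly
(canonical copies of) the graphs `G i`. -/
def wedgeAt {m : ℕ} {V : Fin m → Type*} (G : ∀ i, SimpleGraph (V i)) (x : ∀ i, V i) :
    SimpleGraph (Option (Σ i : Fin m, {u : V i // u ≠ x i})) :=
  SimpleGraph.fromRel (fun a b =>
    match a, b with
    | none, some ⟨i, u⟩ => (G i).Adj (x i) u.val
    | some ⟨i, u⟩, some ⟨j, w⟩ => ∃ h : i = j, (G j).Adj (cast (congrArg V h) u.val) w.val
    | _, _ => False)

/-!
In the inflation `G_I` the darts leaving a vertex `u` form a clique `X_u`, and every dart is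
also adjacent to its reverse. For `k ≥ 2` a `k`-tuple total dominating set meets every clique
`X_u` in at least `k` darts, so the union of such sets for `G_I` and `H_I` also dominates the two
darts of the bridge `xy` in `F_I`: this is the upper bound.

Conversely, restrict a `k`-tuple total dominating set `S` of `F_I` to the darts of `G`. Only the
darts of `X_x` can lose a neighbour (the bridge dart `(x, y)`), and only when that dart lies in
`S`. The deficit is repaired by adding a dart `d₀ ∈ X_x` outside the restriction together with
its reverse: `d₀` then sees its reverse and the `≥ k - 1` darts of `S` in `X_x` (count them at
the bridge dart), and the other darts of `X_x` gain `d₀`. If there is no such `d₀`, each dart of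
`X_x` already sees `deg x - 1 ≥ k` darts of the restriction. Hence
`γ(G_I) ≤ |S ∩ darts of G| + 1`; the same holds for `H` by the symmetry `F(G, H) ≅ F(H, G)`,
and adding gives the lower bound.
-/

instance {V : Type*} [Finite V] (G : SimpleGraph V) : Finite G.Dart :=
  Finite.of_injective _ Dart.toProd_injective

section Inflation

variable {V : Type*} {G : SimpleGraph V}

/-- The clique `X_u` of `inflation G`. -/
def dartsFrom (G : SimpleGraph V) (u : V) : Set G.Dart := {d | d.fst = u}

@[simp] theorem mem_dartsFrom {u : V} {d : G.Dart} : d ∈ dartsFrom G u ↔ d.fst = u := Iff.rfl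

theorem inflation_adj {d e : G.Dart} :
    (inflation G).Adj d e ↔ d ≠ e ∧ (d.fst = e.fst ∨ e = d.symm) := by
  simp only [inflation, fromRel_adj, Dart.ext_iff, Dart.symm_toProd]
  constructor
  · rintro ⟨hne, (h | h) | (h | h)⟩
    · exact ⟨hne, Or.inl h⟩
    · exact ⟨hne, Or.inr (by rw [h, Prod.swap_swap])⟩
    · exact ⟨hne, Or.inl h.symm⟩
    · exact ⟨hne, Or.inr h⟩
  · rintro ⟨hne, h | h⟩
    · exact ⟨hne, Or.inl (Or.inl h)⟩
    · exact ⟨hne, Or.inr (Or.inr h)⟩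

theorem inflation_adj_of_fst_eq {d e : G.Dart} (hne : d ≠ e) (h : d.fst = e.fst) :
    (inflation G).Adj d e :=
  inflation_adj.2 ⟨hne, Or.inl h⟩

theorem inflation_adj_symm (d : G.Dart) : (inflation G).Adj d d.symm :=
  inflation_adj.2 ⟨d.symm_ne.symm, Or.inr rfl⟩

theorem neighborSet_inflation (d : G.Dart) :
    (inflation G).neighborSet d = insert d.symm (dartsFrom G d.fst \ {d}) := by
  ext e
  simp only [mem_neighborSet, inflation_adj, dartsFrom, Set.mem_insert_iff, Set.mem_sdiff,
    Set.mem_ofPred_eq, Set.mem_singleton_iff]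
  constructor
  · rintro ⟨hne, h | h⟩
    · exact Or.inr ⟨h.symm, Ne.symm hne⟩
    · exact Or.inl h
  · rintro (rfl | ⟨h, hne⟩)
    · exact ⟨d.symm_ne.symm, Or.inr rfl⟩
    · exact ⟨Ne.symm hne, Or.inl h.symm⟩

theorem ncard_dartsFrom [Fintype V] [DecidableRel G.Adj] (u : V) :
    (dartsFrom G u).ncard = G.degree u := by
  classical
  rw [← dart_fst_fiber_card_eq_degree, ← Set.ncard_coe_finset]
  congr 1
  ext d
  simp [dartsFrom]

theorem dartsFrom_nonempty [Fintype V] [DecidableRel G.Adj] {u : V} (hu : 0 < G.degree u) :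
    (dartsFrom G u).Nonempty :=
  Set.nonempty_of_ncard_ne_zero (by rw [ncard_dartsFrom]; omega)

end Inflation

namespace SimpleGraph

variable {V V' : Type*} {G : SimpleGraph V} {G' : SimpleGraph V'}

theorem Hom.inflation_adj_mapDart_iff (f : G →g G') (hf : Function.Injective f)
    {d e : G.Dart} : (inflation G').Adj (f.mapDart d) (f.mapDart e) ↔ (inflation G).Adj d e := by
  have hff : Function.Injective (Prod.map f f) := hf.prodMap hf
  simp only [inflation_adj, Hom.mapDart_apply, ne_eq, Dart.ext_iff, Dart.symm_toProd]
  rw [hff.eq_iff, show (Prod.map f f d.toProd).swap = Prod.map f f d.toProd.swap from rfl,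
    hff.eq_iff, Prod.map_fst, Prod.map_fst, hf.eq_iff]

def Embedding.inflation (f : G ↪g G') : inflation G ↪g inflation G' where
  toFun := f.toHom.mapDart
  inj' _ _ h := Dart.ext _ _ (f.injective.prodMap f.injective (congrArg Dart.toProd h))
  map_rel_iff' := f.toHom.inflation_adj_mapDart_iff f.injective

@[simp] theorem Embedding.inflation_apply_toProd (f : G ↪g G') (d : G.Dart) :
    (f.inflation d).toProd = d.toProd.map f f := rfl

def Iso.inflation (f : G ≃g G') : inflation G ≃g inflation G' where
  toFun := f.toEmbedding.inflation
  invFun := f.symm.toEmbedding.inflation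
  left_inv d := Dart.ext _ _ (by ext <;> simp)
  right_inv d := Dart.ext _ _ (by ext <;> simp)
  map_rel_iff' := f.toEmbedding.inflation.map_rel_iff

@[simp] theorem Iso.inflation_apply_toProd (f : G ≃g G') (d : G.Dart) :
    (f.inflation d).toProd = d.toProd.map f f := rfl

end SimpleGraph

section KTupleDomination

variable {W W' : Type*} {H : SimpleGraph W} {H' : SimpleGraph W'} {k : ℕ} {S : Set W}

theorem IsKTDS.ktdn_le (hS : IsKTDS H k S) : ktdn H k ≤ S.ncard :=
  Nat.sInf_le ⟨S, hS, rfl⟩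

theorem IsKTDS.exists_ncard_eq_ktdn (hS : IsKTDS H k S) :
    ∃ T, IsKTDS H k T ∧ T.ncard = ktdn H k :=
  Nat.sInf_mem (s := {n | ∃ T, IsKTDS H k T ∧ T.ncard = n}) ⟨_, S, hS, rfl⟩

theorem SimpleGraph.Iso.ncard_image_inter_neighborSet (f : H ≃g H') (S : Set W) (v : W) :
    (f '' S ∩ H'.neighborSet (f v)).ncard = (S ∩ H.neighborSet v).ncard := by
  rw [← f.image_neighborSet, ← Set.image_inter f.injective,
    Set.ncard_image_of_injective _ f.injective]

theorem IsKTDS.image (hS : IsKTDS H k S) (f : H ≃g H') : IsKTDS H' k (f '' S) := by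
  intro v
  rw [← f.apply_symm_apply v, f.ncard_image_inter_neighborSet]
  exact hS _

end KTupleDomination

section InflationDomination

variable {V : Type*} {G : SimpleGraph V} {k : ℕ}

theorem ncard_inter_neighborSet_inflation_le [Finite V] (S : Set G.Dart) (d : G.Dart) :
    (S ∩ (inflation G).neighborSet d).ncard ≤ ((S ∩ dartsFrom G d.fst) \ {d}).ncard + 1 := by
  refine (Set.ncard_le_ncard ?_).trans (Set.ncard_insert_le d.symm _)
  rintro e ⟨heS, he⟩
  rw [neighborSet_inflation] at he
  rcases he with rfl | ⟨heX, hne⟩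
  · exact Or.inl rfl
  · exact Or.inr ⟨⟨heS, heX⟩, hne⟩

theorem ncard_neighborSet_inflation [Fintype V] [DecidableRel G.Adj] (d : G.Dart) :
    ((inflation G).neighborSet d).ncard = G.degree d.fst := by
  have hsymm : d.symm ∉ dartsFrom G d.fst \ {d} := fun h => d.snd_ne_fst h.1
  rw [neighborSet_inflation, Set.ncard_insert_of_notMem hsymm,
    Set.ncard_sdiff_singleton_of_mem (show d ∈ dartsFrom G d.fst from rfl), ncard_dartsFrom]
  have : 0 < G.degree d.fst := G.degree_pos_iff_exists_adj _ |>.2 ⟨_, d.adj⟩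
  omega

theorem isKTDS_univ_inflation [Fintype V] [DecidableRel G.Adj] (h : ∀ u, k ≤ G.degree u) :
    IsKTDS (inflation G) k Set.univ := by
  intro d
  rw [Set.univ_inter, ncard_neighborSet_inflation]
  exact h _

theorem IsKTDS.le_ncard_inter_dartsFrom [Finite V] (hk : 2 ≤ k) {S : Set G.Dart}
    (hS : IsKTDS (inflation G) k S) {u : V} (hu : (dartsFrom G u).Nonempty) :
    k ≤ (S ∩ dartsFrom G u).ncard := by
  have key : ∀ d ∈ dartsFrom G u, k ≤ ((S ∩ dartsFrom G u) \ {d}).ncard + 1 := by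
    rintro d rfl
    exact (hS d).trans (ncard_inter_neighborSet_inflation_le S d)
  rcases (S ∩ dartsFrom G u).eq_empty_or_nonempty with hempty | ⟨d, hd⟩
  · obtain ⟨d, hd⟩ := hu
    have := key d hd
    rw [hempty, Set.empty_sdiff, Set.ncard_empty] at this
    omega
  · have := key d hd.2
    rw [Set.ncard_sdiff_singleton_of_mem hd] at this
    have := (Set.ncard_pos).2 ⟨d, hd⟩
    omega

theorem isKTDS_inflation_of_dartsFrom_subset [Fintype V] [DecidableRel G.Adj] {x : V}
    (hx : k < G.degree x) {P : Set G.Dart}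
    (hfar : ∀ d : G.Dart, d.fst ≠ x → k ≤ (P ∩ (inflation G).neighborSet d).ncard)
    (hX : dartsFrom G x ⊆ P) :
    IsKTDS (inflation G) k P := by
  intro d
  by_cases hd : d.fst = x
  · have hsub : dartsFrom G x \ {d} ⊆ P ∩ (inflation G).neighborSet d :=
      fun e ⟨he, hne⟩ => ⟨hX he, inflation_adj_of_fst_eq (Ne.symm hne) (hd.trans he.symm)⟩
    have := Set.ncard_le_ncard hsub
    rw [Set.ncard_sdiff_singleton_of_mem (mem_dartsFrom.2 hd), ncard_dartsFrom] at this
    omega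
  · exact hfar d hd

theorem isKTDS_inflation_insert_insert_symm [Finite V] {x : V} {P : Set G.Dart}
    (hfar : ∀ d : G.Dart, d.fst ≠ x → k ≤ (P ∩ (inflation G).neighborSet d).ncard)
    (hnear : ∀ d : G.Dart, d.fst = x → k ≤ (P ∩ (inflation G).neighborSet d).ncard + 1)
    (hclique : k ≤ (P ∩ dartsFrom G x).ncard + 1) {d₀ : G.Dart} (hd₀ : d₀.fst = x)
    (hd₀P : d₀ ∉ P) :
    IsKTDS (inflation G) k (insert d₀ (insert d₀.symm P)) := by
  have hPT : P ⊆ insert d₀ (insert d₀.symm P) :=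
    (Set.subset_insert _ _).trans (Set.subset_insert _ _)
  intro d
  by_cases hd : d.fst = x
  · rcases eq_or_ne d d₀ with rfl | hne
    · have hsymm : d.symm ∉ P ∩ dartsFrom G x := fun h => d.snd_ne_fst (h.2.trans hd.symm)
      have hsub : insert d.symm (P ∩ dartsFrom G x) ⊆
          insert d (insert d.symm P) ∩ (inflation G).neighborSet d :=
        Set.insert_subset_iff.2 ⟨⟨Set.mem_insert_of_mem _ (Set.mem_insert _ _),
          inflation_adj_symm d⟩, fun e ⟨heP, he⟩ => ⟨hPT heP,
            inflation_adj_of_fst_eq (fun h => hd₀P (h ▸ heP)) (hd.trans he.symm)⟩⟩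
      calc k ≤ (P ∩ dartsFrom G x).ncard + 1 := hclique
        _ = (insert d.symm (P ∩ dartsFrom G x)).ncard := (Set.ncard_insert_of_notMem hsymm).symm
        _ ≤ _ := Set.ncard_le_ncard hsub
    · have hd₀' : d₀ ∉ P ∩ (inflation G).neighborSet d := fun h => hd₀P h.1
      have hsub : insert d₀ (P ∩ (inflation G).neighborSet d) ⊆
          insert d₀ (insert d₀.symm P) ∩ (inflation G).neighborSet d :=
        Set.insert_subset_iff.2 ⟨⟨Set.mem_insert _ _,
          inflation_adj_of_fst_eq hne (hd.trans hd₀.symm)⟩, Set.inter_subset_inter_left _ hPT⟩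
      calc k ≤ (P ∩ (inflation G).neighborSet d).ncard + 1 := hnear d hd
        _ = (insert d₀ (P ∩ (inflation G).neighborSet d)).ncard :=
            (Set.ncard_insert_of_notMem hd₀').symm
        _ ≤ _ := Set.ncard_le_ncard hsub
  · exact (hfar d hd).trans (Set.ncard_le_ncard (Set.inter_subset_inter_left _ hPT))

theorem exists_isKTDS_inflation_of_deficit [Fintype V] [DecidableRel G.Adj] {x : V}
    (hx : k < G.degree x) {P : Set G.Dart}
    (hfar : ∀ d : G.Dart, d.fst ≠ x → k ≤ (P ∩ (inflation G).neighborSet d).ncard)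
    (hnear : ∀ d : G.Dart, d.fst = x → k ≤ (P ∩ (inflation G).neighborSet d).ncard + 1)
    (hclique : k ≤ (P ∩ dartsFrom G x).ncard + 1) :
    ∃ T, IsKTDS (inflation G) k T ∧ T.ncard ≤ P.ncard + 2 := by
  by_cases hX : dartsFrom G x ⊆ P
  · exact ⟨P, isKTDS_inflation_of_dartsFrom_subset hx hfar hX, by omega⟩
  obtain ⟨d₀, hd₀, hd₀P⟩ := Set.not_subset.1 hX
  refine ⟨_, isKTDS_inflation_insert_insert_symm hfar hnear hclique hd₀ hd₀P, ?_⟩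
  have := Set.ncard_insert_le d₀ (insert d₀.symm P)
  have := Set.ncard_insert_le d₀.symm P
  omega

end InflationDomination

section JoinByEdge

variable {V W : Type*} {G : SimpleGraph V} {H : SimpleGraph W} {x : V} {y : W}

@[simp] theorem joinByEdge_adj_inl_inl {u v : V} :
    (joinByEdge G H x y).Adj (.inl u) (.inl v) ↔ G.Adj u v := by
  simpa [joinByEdge, G.adj_comm v u] using G.ne_of_adj

@[simp] theorem joinByEdge_adj_inr_inr {u v : W} :
    (joinByEdge G H x y).Adj (.inr u) (.inr v) ↔ H.Adj u v := by
  simpa [joinByEdge, H.adj_comm v u] using H.ne_of_adj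

@[simp] theorem joinByEdge_adj_inl_inr {u : V} {v : W} :
    (joinByEdge G H x y).Adj (.inl u) (.inr v) ↔ u = x ∧ v = y := by
  simp [joinByEdge]

@[simp] theorem joinByEdge_adj_inr_inl {u : W} {v : V} :
    (joinByEdge G H x y).Adj (.inr u) (.inl v) ↔ v = x ∧ u = y := by
  simp [joinByEdge]

variable (G H x y) in
def joinByEdgeInl : G ↪g joinByEdge G H x y :=
  ⟨Function.Embedding.inl, joinByEdge_adj_inl_inl⟩

variable (G H x y) in
def joinByEdgeComm : joinByEdge G H x y ≃g joinByEdge H G y x :=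
  ⟨Equiv.sumComm V W, by rintro (u | u) (v | v) <;> simp [and_comm]⟩

@[simp] theorem joinByEdgeComm_apply (a : V ⊕ W) : joinByEdgeComm G H x y a = a.swap := rfl

variable (G H x y) in
def bridgeDart : (joinByEdge G H x y).Dart := ⟨(.inl x, .inr y), by simp⟩

local notation "ι" => Embedding.inflation (joinByEdgeInl G H x y)
local notation "σ" => Iso.inflation (joinByEdgeComm G H x y)

theorem mem_image_dartsFrom_or_eq_bridgeDart {D : (joinByEdge G H x y).Dart} {u : V}
    (h : D.fst = .inl u) :
    D ∈ ι '' dartsFrom G u ∨ (u = x ∧ D = bridgeDart G H x y) := by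
  obtain ⟨⟨a, b | v⟩, hD⟩ := D <;> obtain rfl : a = .inl u := h
  · exact .inl ⟨⟨(u, b), by simpa using hD⟩, rfl, rfl⟩
  · obtain ⟨rfl, rfl⟩ := joinByEdge_adj_inl_inr.1 hD
    exact .inr ⟨rfl, rfl⟩

theorem adj_inflation_joinByEdgeInl_cases {d : G.Dart} {D : (joinByEdge G H x y).Dart}
    (h : (inflation (joinByEdge G H x y)).Adj (ι d) D) :
    (∃ e, (inflation G).Adj d e ∧ ι e = D) ∨ (d.fst = x ∧ D = bridgeDart G H x y) := by
  rcases inflation_adj.1 h with ⟨hne, hfst | rfl⟩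
  · rcases mem_image_dartsFrom_or_eq_bridgeDart hfst.symm with ⟨e, he, rfl⟩ | hb
    · exact .inl ⟨e, inflation_adj_of_fst_eq (fun h => hne (congrArg _ h)) he.symm, rfl⟩
    · exact .inr hb
  · exact .inl ⟨d.symm, inflation_adj_symm d, rfl⟩

theorem adj_inflation_bridgeDart_cases {D : (joinByEdge G H x y).Dart}
    (h : (inflation (joinByEdge G H x y)).Adj (bridgeDart G H x y) D) :
    D ∈ ι '' dartsFrom G x ∨ D = (bridgeDart G H x y).symm := by
  rcases inflation_adj.1 h with ⟨hne, hfst | rfl⟩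
  · rcases mem_image_dartsFrom_or_eq_bridgeDart hfst.symm with hD | ⟨-, rfl⟩
    · exact .inl hD
    · exact absurd rfl hne
  · exact .inr rfl

theorem bridgeDart_ne_inflation_joinByEdgeInl (d : G.Dart) : bridgeDart G H x y ≠ ι d :=
  fun h => Sum.inr_ne_inl (congrArg (fun D : (joinByEdge G H x y).Dart => D.snd) h)

theorem inflation_adj_bridgeDart {e : G.Dart} (he : e.fst = x) :
    (inflation (joinByEdge G H x y)).Adj (bridgeDart G H x y) (ι e) :=
  inflation_adj_of_fst_eq (bridgeDart_ne_inflation_joinByEdgeInl e) (congrArg Sum.inl he.symm)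

section Domination

variable {k : ℕ} {S : Set (joinByEdge G H x y).Dart}

theorem IsKTDS.le_ncard_preimage_inter_neighborSet_add_one [Finite V] [Finite W]
    (hS : IsKTDS (inflation (joinByEdge G H x y)) k S) (d : G.Dart) :
    k ≤ (ι ⁻¹' S ∩ (inflation G).neighborSet d).ncard + 1 := by
  have hsub : S ∩ (inflation (joinByEdge G H x y)).neighborSet (ι d) ⊆
      insert (bridgeDart G H x y) (ι '' (ι ⁻¹' S ∩ (inflation G).neighborSet d)) := by
    rintro D ⟨hDS, hD⟩
    rcases adj_inflation_joinByEdgeInl_cases hD with ⟨e, he, rfl⟩ | ⟨-, rfl⟩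
    · exact Or.inr ⟨e, ⟨hDS, he⟩, rfl⟩
    · exact Or.inl rfl
  calc k ≤ _ := hS (ι d)
    _ ≤ _ := Set.ncard_le_ncard hsub
    _ ≤ _ := Set.ncard_insert_le _ _
    _ = _ := by rw [Set.ncard_image_of_injective _ (RelEmbedding.injective _)]

theorem IsKTDS.le_ncard_preimage_inter_neighborSet [Finite V] [Finite W]
    (hS : IsKTDS (inflation (joinByEdge G H x y)) k S) {d : G.Dart}
    (h : bridgeDart G H x y ∉ S ∨ d.fst ≠ x) :
    k ≤ (ι ⁻¹' S ∩ (inflation G).neighborSet d).ncard := by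
  have hsub : S ∩ (inflation (joinByEdge G H x y)).neighborSet (ι d) ⊆
      ι '' (ι ⁻¹' S ∩ (inflation G).neighborSet d) := by
    rintro D ⟨hDS, hD⟩
    rcases adj_inflation_joinByEdgeInl_cases hD with ⟨e, he, rfl⟩ | ⟨hd, rfl⟩
    · exact ⟨e, ⟨hDS, he⟩, rfl⟩
    · exact (h.elim (· hDS) (· hd)).elim
  calc k ≤ _ := hS (ι d)
    _ ≤ _ := Set.ncard_le_ncard hsub
    _ = _ := Set.ncard_image_of_injective _ (RelEmbedding.injective _)

theorem IsKTDS.le_ncard_preimage_inter_dartsFrom_add_one [Finite V] [Finite W]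
    (hS : IsKTDS (inflation (joinByEdge G H x y)) k S) :
    k ≤ (ι ⁻¹' S ∩ dartsFrom G x).ncard + 1 := by
  have hsub : S ∩ (inflation (joinByEdge G H x y)).neighborSet (bridgeDart G H x y) ⊆
      insert (bridgeDart G H x y).symm (ι '' (ι ⁻¹' S ∩ dartsFrom G x)) := by
    rintro D ⟨hDS, hD⟩
    rcases adj_inflation_bridgeDart_cases hD with ⟨e, he, rfl⟩ | rfl
    · exact Or.inr ⟨e, ⟨hDS, he⟩, rfl⟩
    · exact Or.inl rfl
  calc k ≤ _ := hS _
    _ ≤ _ := Set.ncard_le_ncard hsub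
    _ ≤ _ := Set.ncard_insert_le _ _
    _ = _ := by rw [Set.ncard_image_of_injective _ (RelEmbedding.injective _)]

theorem ncard_preimage_inflation_joinByEdgeInl_le [Finite V] [Finite W]
    (S : Set (joinByEdge G H x y).Dart) :
    (ι ⁻¹' S).ncard ≤ (S ∩ {D | D.fst.isLeft}).ncard :=
  Set.ncard_le_ncard_of_injOn _ (fun _ hd => ⟨hd, rfl⟩) (RelEmbedding.injective _).injOn

theorem ncard_preimage_inflation_joinByEdgeInl_add_one_le [Finite V] [Finite W]
    (hb : bridgeDart G H x y ∈ S) :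
    (ι ⁻¹' S).ncard + 1 ≤ (S ∩ {D | D.fst.isLeft}).ncard := by
  have hnot : bridgeDart G H x y ∉ ι '' (ι ⁻¹' S) :=
    fun ⟨d, _, h⟩ => bridgeDart_ne_inflation_joinByEdgeInl d h.symm
  calc (ι ⁻¹' S).ncard + 1 = (insert (bridgeDart G H x y) (ι '' (ι ⁻¹' S))).ncard := by
        rw [Set.ncard_insert_of_notMem hnot,
          Set.ncard_image_of_injective _ (RelEmbedding.injective _)]
    _ ≤ (S ∩ {D | D.fst.isLeft}).ncard := Set.ncard_le_ncard <|
        Set.insert_subset_iff.2 ⟨⟨hb, rfl⟩,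
          Set.subset_inter (Set.image_preimage_subset _ _) (by rintro _ ⟨d, -, rfl⟩; rfl)⟩

theorem IsKTDS.ktdn_inflation_le_ncard_inter_isLeft [Fintype V] [DecidableRel G.Adj] [Finite W]
    (hx : k < G.degree x) (hS : IsKTDS (inflation (joinByEdge G H x y)) k S) :
    ktdn (inflation G) k ≤ (S ∩ {D | D.fst.isLeft}).ncard + 1 := by
  by_cases hb : bridgeDart G H x y ∈ S
  · obtain ⟨T, hT, hTcard⟩ := exists_isKTDS_inflation_of_deficit hx
      (fun _ hd => hS.le_ncard_preimage_inter_neighborSet (.inr hd))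
      (fun d _ => hS.le_ncard_preimage_inter_neighborSet_add_one d)
      hS.le_ncard_preimage_inter_dartsFrom_add_one
    have := ncard_preimage_inflation_joinByEdgeInl_add_one_le hb
    have := hT.ktdn_le
    omega
  · have hP : IsKTDS (inflation G) k (ι ⁻¹' S) :=
      fun _ => hS.le_ncard_preimage_inter_neighborSet (.inl hb)
    exact hP.ktdn_le.trans ((ncard_preimage_inflation_joinByEdgeInl_le S).trans (Nat.le_succ _))

theorem IsKTDS.ktdn_inflation_le_ncard_sdiff_isLeft [Finite V] [Fintype W] [DecidableRel H.Adj]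
    (hy : k < H.degree y) (hS : IsKTDS (inflation (joinByEdge G H x y)) k S) :
    ktdn (inflation H) k ≤ (S \ {D | D.fst.isLeft}).ncard + 1 := by
  have hpre : σ ⁻¹' {D | D.fst.isLeft} = {D | D.fst.isLeft}ᶜ := by
    ext D
    simp
  have := (hS.image σ).ktdn_inflation_le_ncard_inter_isLeft hy
  rwa [← Set.image_inter_preimage, hpre, ← Set.sdiff_eq,
    Set.ncard_image_of_injective _ (RelIso.injective _)] at this

theorem IsKTDS.le_ncard_image_inter_neighborSet_of_isLeft [Finite V] [Finite W] (hk : 2 ≤ k)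
    (hx : (dartsFrom G x).Nonempty) {T : Set G.Dart} (hT : IsKTDS (inflation G) k T)
    {D : (joinByEdge G H x y).Dart} (hD : D.fst.isLeft) :
    k ≤ (ι '' T ∩ (inflation (joinByEdge G H x y)).neighborSet D).ncard := by
  obtain ⟨u, hu⟩ := Sum.isLeft_iff.1 hD
  rcases mem_image_dartsFrom_or_eq_bridgeDart hu with ⟨d, -, rfl⟩ | ⟨-, rfl⟩
  · exact (hT d).trans <| Set.ncard_le_ncard_of_injOn ι
      (fun e ⟨he, hN⟩ => ⟨⟨e, he, rfl⟩, (RelEmbedding.map_rel_iff _).2 hN⟩)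
      (RelEmbedding.injective _).injOn
  · exact (hT.le_ncard_inter_dartsFrom hk hx).trans <| Set.ncard_le_ncard_of_injOn ι
      (fun e ⟨he, hX⟩ => ⟨⟨e, he, rfl⟩, inflation_adj_bridgeDart hX⟩)
      (RelEmbedding.injective _).injOn

theorem IsKTDS.joinByEdge [Finite V] [Finite W] (hk : 2 ≤ k) (hx : (dartsFrom G x).Nonempty)
    (hy : (dartsFrom H y).Nonempty) {SG : Set G.Dart} {SH : Set H.Dart}
    (hSG : IsKTDS (inflation G) k SG) (hSH : IsKTDS (inflation H) k SH) :
    IsKTDS (inflation (joinByEdge G H x y)) k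
      (ι '' SG ∪ (σ).symm '' ((joinByEdgeInl H G y x).inflation '' SH)) := by
  intro D
  cases hD : D.fst.isLeft
  · have hD' : (σ D).fst.isLeft := by simpa using hD
    calc k ≤ _ := hSH.le_ncard_image_inter_neighborSet_of_isLeft hk hy hD'
      _ = _ := by rw [← (σ).symm.ncard_image_inter_neighborSet, RelIso.symm_apply_apply]
      _ ≤ _ := Set.ncard_le_ncard (Set.inter_subset_inter_left _ Set.subset_union_right)
  · exact (hSG.le_ncard_image_inter_neighborSet_of_isLeft hk hx hD).trans
      (Set.ncard_le_ncard (Set.inter_subset_inter_left _ Set.subset_union_left))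

end Domination

end JoinByEdge

theorem stmt8_general {V W : Type*} [Fintype V] [Fintype W]
    (G : SimpleGraph V) (H : SimpleGraph W) [DecidableRel G.Adj] [DecidableRel H.Adj]
    (x : V) (y : W) (k : ℕ)
    (hk : 2 ≤ k) (hδ : k < min G.minDegree H.minDegree) :
    ktdn (inflation G) k + ktdn (inflation H) k ≤
        ktdn (inflation (joinByEdge G H x y)) k + 2 ∧
      ktdn (inflation (joinByEdge G H x y)) k ≤
        ktdn (inflation G) k + ktdn (inflation H) k := by
  have hG (u : V) : k < G.degree u :=
    (hδ.trans_le (min_le_left _ _)).trans_le (G.minDegree_le_degree u)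
  have hH (u : W) : k < H.degree u :=
    (hδ.trans_le (min_le_right _ _)).trans_le (H.minDegree_le_degree u)
  obtain ⟨SG, hSG, hSGcard⟩ := (isKTDS_univ_inflation fun u => (hG u).le).exists_ncard_eq_ktdn
  obtain ⟨SH, hSH, hSHcard⟩ := (isKTDS_univ_inflation fun u => (hH u).le).exists_ncard_eq_ktdn
  have hF := hSG.joinByEdge (x := x) (y := y) hk (dartsFrom_nonempty (by have := hG x; omega))
    (dartsFrom_nonempty (by have := hH y; omega)) hSH
  refine ⟨?_, hF.ktdn_le.trans ?_⟩
  · obtain ⟨S, hS, hScard⟩ := hF.exists_ncard_eq_ktdn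
    have := hS.ktdn_inflation_le_ncard_inter_isLeft (hG x)
    have := hS.ktdn_inflation_le_ncard_sdiff_isLeft (hH y)
    have := Set.ncard_inter_add_ncard_sdiff_eq_ncard S {D | D.fst.isLeft}
    omega
  · rw [← hSGcard, ← hSHcard]
    refine (Set.ncard_union_le _ _).trans_eq ?_
    simp only [Set.ncard_image_of_injective _ (RelEmbedding.injective _),
      Set.ncard_image_of_injective _ (RelIso.injective _)]

/-- **Theorem (cut-edge bounds, strict minimum-degree case).** If `F` has a cut-edge `e`
whose removal leaves the two (connected) components `G` and `H`, and
`2 ≤ k < min {δ(G), δ(H)}`, then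
`γ_{×k,t}(G_I) + γ_{×k,t}(H_I) - 2 ≤ γ_{×k,t}(F_I) ≤ γ_{×k,t}(G_I) + γ_{×k,t}(H_I)`. -/
theorem stmt8 {V W : Type*} [Fintype V] [Fintype W]
    (G : SimpleGraph V) (H : SimpleGraph W) [DecidableRel G.Adj] [DecidableRel H.Adj]
    (hG : G.Connected) (hH : H.Connected) (x : V) (y : W) (k : ℕ)
    (hk : 2 ≤ k) (hδ : k < min G.minDegree H.minDegree) :
    ktdn (inflation G) k + ktdn (inflation H) k ≤
        ktdn (inflation (joinByEdge G H x y)) k + 2 ∧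
      ktdn (inflation (joinByEdge G H x y)) k ≤
        ktdn (inflation G) k + ktdn (inflation H) k :=
  stmt8_general G H x y k hk hδ
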